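/- Under Assumption 1 with 0 ≤ ε < 1, any optimal solution X_opt of problem P(A,r) satisfies, for every column index i, ||v_i − V X_opt(:,i)||_1 ≤ 4ε/(1−ε), where v_i is the i-th column of V. -/

import Mathlib

noncomputable section
open Matrix
open scoped Classical

/-- Entrywise L1 norm of a vector. -/
def l1 {α : Type*} [Fintype α] (v : α → ℝ) : ℝ := ∑ i, |v i|

/-- Induced L1 norm of a matrix (maximum column sum of absolute values). -/
def ml1 {α β : Type*} [Fintype α] [Fintype β] (M : Matrix α β ℝ) : ℝ :=
  sSup (Set.range fun j => ∑ i, |M i j|)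

/-- Feasible set of problem P(A,r). -/
def Feas {ι : Type*} [Fintype ι] [DecidableEq ι] (X : Matrix ι ι ℝ) (r : ℕ) : Prop :=
  Matrix.trace X = (r : ℝ) ∧ (∀ i, X i i ≤ 1) ∧ (∀ i j, 0 ≤ X i j) ∧
    (∀ i j, X i j ≤ X i i)

/-- κ(W) = min over j of min over nonnegative z (supported off j) of
    ‖w_j − W(:,R∖{j}) z‖₁. -/
def kappa {d r : ℕ} (W : Matrix (Fin d) (Fin r) ℝ) : ℝ :=
  sInf {c | ∃ (j : Fin r) (z : Fin r → ℝ), (∀ k, 0 ≤ z k) ∧ z j = 0 ∧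
    c = l1 (fun i => W i j - ∑ k, W i k * z k)}

/-- ω(W) = min over distinct pairs of ‖w_{j₁} − w_{j₂}‖₁. -/
def omegaW {d r : ℕ} (W : Matrix (Fin d) (Fin r) ℝ) : ℝ :=
  sInf {c | ∃ j₁ j₂ : Fin r, j₁ ≠ j₂ ∧ c = l1 (fun i => W i j₁ - W i j₂)}

/-- β = maximum entry of H̄. -/
def betaH {r m : ℕ} (Hb : Matrix (Fin r) (Fin m) ℝ) : ℝ :=
  sSup (Set.range fun p : Fin r × Fin m => Hb p.1 p.2)

/-!
Since the columns of `W` occur among those of `V = W H`, the point `X = Πᵀ [H; 0]` is feasible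
with `V X = V`, so `A - A X = N - N X` and the optimal residual is at most `2ε`. For an optimal
`X`, write `θ = ‖v_i - V x_i‖₁` and `s = ‖x_i‖₁`. Splitting `V - V X = (A - A X) - (N - N X)`
gives `θ ≤ 2ε + ε (1 + s)`, and as `V` is column-stochastic, `s = ‖V x_i‖₁ ≤ 1 + θ`.
Together, `θ (1 - ε) ≤ 4ε`.
-/

lemma abs_le_l1 {α : Type*} [Fintype α] (v : α → ℝ) (i : α) : |v i| ≤ l1 v :=
  Finset.single_le_sum (f := fun i => |v i|) (fun _ _ => abs_nonneg _) (Finset.mem_univ i)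

lemma l1_eq_sum_of_nonneg {α : Type*} [Fintype α] {v : α → ℝ} (hv : ∀ i, 0 ≤ v i) :
    l1 v = ∑ i, v i :=
  Finset.sum_congr rfl fun i _ => abs_of_nonneg (hv i)

lemma l1_sub_le {α : Type*} [Fintype α] (v w : α → ℝ) : l1 (v - w) ≤ l1 v + l1 w := by
  rw [l1, l1, l1, ← Finset.sum_add_distrib]
  exact Finset.sum_le_sum fun i _ => abs_sub _ _

lemma l1_col_sub_le {α β : Type*} [Fintype α] (M M' : Matrix α β ℝ) (j : β) :
    l1 ((M - M')ᵀ j) ≤ l1 (Mᵀ j) + l1 (M'ᵀ j) :=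
  l1_sub_le _ _

lemma mul_apply_nonneg {α β γ : Type*} [Fintype β] {V : Matrix α β ℝ} {X : Matrix β γ ℝ}
    (hV : ∀ k u, 0 ≤ V k u) (hX : ∀ u v, 0 ≤ X u v) (k : α) (v : γ) : 0 ≤ (V * X) k v :=
  Finset.sum_nonneg fun u _ => mul_nonneg (hV k u) (hX u v)

section InducedNorm

variable {α β : Type*} [Fintype α] [Fintype β]

lemma ml1_nonneg (M : Matrix α β ℝ) : 0 ≤ ml1 M :=
  Real.sSup_nonneg (by rintro _ ⟨j, rfl⟩; exact Finset.sum_nonneg fun _ _ => abs_nonneg _)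

lemma l1_col_le_ml1 (M : Matrix α β ℝ) (j : β) : l1 (Mᵀ j) ≤ ml1 M :=
  le_csSup (Set.finite_range _).bddAbove ⟨j, rfl⟩

lemma ml1_le {M : Matrix α β ℝ} {c : ℝ} (h : ∀ j, l1 (Mᵀ j) ≤ c) (hc : 0 ≤ c) : ml1 M ≤ c :=
  Real.sSup_le (by rintro _ ⟨j, rfl⟩; exact h j) hc

lemma l1_mulVec_le (M : Matrix α β ℝ) (x : β → ℝ) : l1 (M *ᵥ x) ≤ ml1 M * l1 x :=
  calc l1 (M *ᵥ x) ≤ ∑ k, ∑ u, |M k u| * |x u| :=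
        Finset.sum_le_sum fun k _ => (Finset.abs_sum_le_sum_abs _ _).trans_eq <| by
          simp only [abs_mul]
    _ = ∑ u, l1 (Mᵀ u) * |x u| := by
        rw [Finset.sum_comm]; simp only [l1, transpose_apply, Finset.sum_mul]
    _ ≤ ∑ u, ml1 M * |x u| :=
        Finset.sum_le_sum fun u _ => mul_le_mul_of_nonneg_right (l1_col_le_ml1 M u) (abs_nonneg _)
    _ = ml1 M * l1 x := (Finset.mul_sum _ _ _).symm

lemma l1_col_sub_mul_le (N : Matrix α β ℝ) (X : Matrix β β ℝ) (j : β) :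
    l1 ((N - N * X)ᵀ j) ≤ ml1 N * (1 + l1 (Xᵀ j)) :=
  calc l1 ((N - N * X)ᵀ j) ≤ l1 (Nᵀ j) + l1 (N *ᵥ Xᵀ j) := l1_col_sub_le _ _ j
    _ ≤ ml1 N + ml1 N * l1 (Xᵀ j) := add_le_add (l1_col_le_ml1 N j) (l1_mulVec_le N _)
    _ = ml1 N * (1 + l1 (Xᵀ j)) := by ring

lemma ml1_sub_mul_le_two_mul (N : Matrix α β ℝ) {X : Matrix β β ℝ}
    (hX : ∀ j, l1 (Xᵀ j) ≤ 1) : ml1 (N - N * X) ≤ 2 * ml1 N :=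
  ml1_le (fun j => (l1_col_sub_mul_le N X j).trans <| by
    nlinarith [hX j, ml1_nonneg N]) (by linarith [ml1_nonneg N])

lemma l1_col_sub_mul_le_add (V N : Matrix α β ℝ) (X : Matrix β β ℝ) (j : β) :
    l1 ((V - V * X)ᵀ j) ≤ l1 ((V + N - (V + N) * X)ᵀ j) + ml1 N * (1 + l1 (Xᵀ j)) := by
  have hsplit : V - V * X = (V + N - (V + N) * X) - (N - N * X) := by
    rw [Matrix.add_mul]; abel
  rw [hsplit]
  exact (l1_col_sub_le _ _ j).trans (add_le_add le_rfl (l1_col_sub_mul_le N X j))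

lemma l1_col_le_one_add {V : Matrix α β ℝ} {X : Matrix β β ℝ} (hV : ∀ k u, 0 ≤ V k u)
    (hVcol : ∀ u, l1 (Vᵀ u) = 1) (hX : ∀ u v, 0 ≤ X u v) (j : β) :
    l1 (Xᵀ j) ≤ 1 + l1 ((V - V * X)ᵀ j) := by
  have hVsum : ∀ u, ∑ k, V k u = 1 := fun u => (l1_eq_sum_of_nonneg (hV · u)).symm.trans (hVcol u)
  have hmass : l1 (Xᵀ j) = ∑ k, (V * X) k j := by
    rw [l1_eq_sum_of_nonneg (v := Xᵀ j) (hX · j)]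
    simp only [transpose_apply, mul_apply]
    rw [Finset.sum_comm]
    simp only [← Finset.sum_mul, hVsum, one_mul]
  calc l1 (Xᵀ j) ≤ l1 ((V * X)ᵀ j) :=
        hmass.trans_le (Finset.sum_le_sum fun _ _ => le_abs_self _)
    _ = l1 ((V - (V - V * X))ᵀ j) := by rw [sub_sub_cancel]
    _ ≤ 1 + l1 ((V - V * X)ᵀ j) := (l1_col_sub_le _ _ j).trans_eq (by rw [hVcol])

end InducedNorm

section IdealSolution

variable {ρ μ : Type*} (σ : Equiv.Perm (ρ ⊕ μ))

/-- The point `Πᵀ [H; 0]` of `P(A, r)`, where `Π` is the column permutation `σ`. -/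
def idealX (H : Matrix ρ (ρ ⊕ μ) ℝ) : Matrix (ρ ⊕ μ) (ρ ⊕ μ) ℝ :=
  (fromRows H 0).submatrix σ id

lemma submatrix_fromCols_one_nonneg [DecidableEq ρ] {Hbar : Matrix ρ μ ℝ}
    (hHbar : ∀ j k, 0 ≤ Hbar j k) (j : ρ) (u : ρ ⊕ μ) :
    0 ≤ (fromCols 1 Hbar).submatrix id σ j u := by
  rcases h : σ u with k | k
  · simp only [submatrix_apply, id_eq, h, fromCols_apply_inl, one_apply]
    split_ifs <;> norm_num
  · simpa [h] using hHbar j k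

lemma submatrix_fromCols_one_apply_symm_inl [DecidableEq ρ] (Hbar : Matrix ρ μ ℝ) (j : ρ) :
    (fromCols 1 Hbar).submatrix id σ j (σ.symm (Sum.inl j)) = 1 := by
  simp

variable [Fintype ρ] [Fintype μ]

lemma submatrix_fromCols_one_mul_idealX [DecidableEq ρ] (Hbar : Matrix ρ μ ℝ)
    (H : Matrix ρ (ρ ⊕ μ) ℝ) : (fromCols 1 Hbar).submatrix id σ * idealX σ H = H := by
  rw [idealX, submatrix_mul_equiv _ _ id σ id, fromCols_mul_fromRows]
  simp

lemma l1_col_idealX (H : Matrix ρ (ρ ⊕ μ) ℝ) (v : ρ ⊕ μ) :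
    l1 ((idealX σ H)ᵀ v) = l1 (Hᵀ v) := by
  simp only [l1, transpose_apply, idealX, submatrix_apply, id]
  rw [Equiv.sum_comp σ (fun s => |fromRows H 0 s v|), Fintype.sum_sum_type]
  simp

lemma feas_idealX [DecidableEq ρ] [DecidableEq μ] {H : Matrix ρ (ρ ⊕ μ) ℝ}
    (hH : ∀ j u, 0 ≤ H j u) (hHcol : ∀ u, l1 (Hᵀ u) = 1) (hHdiag : ∀ j, H j (σ.symm (Sum.inl j)) = 1) :
    Feas (idealX σ H) (Fintype.card ρ) := by
  have hHle : ∀ j u, H j u ≤ 1 := fun j u =>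
    (le_abs_self _).trans ((abs_le_l1 (Hᵀ u) j).trans_eq (hHcol u))
  refine ⟨?_, fun u => ?_, fun u v => ?_, fun u v => ?_⟩
  · rw [trace, ← Equiv.sum_comp σ.symm, Fintype.sum_sum_type]
    simp [idealX, hHdiag]
  all_goals
    simp only [idealX, submatrix_apply, id]
    rcases h : σ u with j | k <;>
      simp only [fromRows_apply_inl, fromRows_apply_inr, Matrix.zero_apply, le_refl, zero_le_one]
  · exact hHle j u
  · exact hH j v
  · rw [σ.eq_symm_apply.mpr h, hHdiag]
    exact hHle j v

end IdealSolution

theorem opt_approx_bound_general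
    {d r m : ℕ} (W : Matrix (Fin d) (Fin r) ℝ) (Hbar : Matrix (Fin r) (Fin m) ℝ)
    (σ : Equiv.Perm (Fin r ⊕ Fin m))
    (N A V : Matrix (Fin d) (Fin r ⊕ Fin m) ℝ)
    (H : Matrix (Fin r) (Fin r ⊕ Fin m) ℝ) (ε : ℝ)
    (hW : ∀ i j, 0 ≤ W i j) (hHbar : ∀ i j, 0 ≤ Hbar i j)
    (hH : H = fun j u => Matrix.fromCols (1 : Matrix (Fin r) (Fin r) ℝ) Hbar j (σ u))
    (hV : V = W * H) (hA : A = V + N)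
    (hVcol : ∀ u, l1 (fun i => V i u) = 1)
    (hHcol : ∀ u, l1 (fun j => H j u) = 1)
    (hε1 : ε < 1) (hN : ml1 N ≤ ε)
    (Xopt : Matrix (Fin r ⊕ Fin m) (Fin r ⊕ Fin m) ℝ)
    (hfeas : Feas Xopt r)
    (hopt : ∀ X : Matrix (Fin r ⊕ Fin m) (Fin r ⊕ Fin m) ℝ,
      Feas X r → ml1 (A - A * Xopt) ≤ ml1 (A - A * X)) :
    ∀ i, l1 (fun k => V k i - (V * Xopt) k i) ≤ 4 * ε / (1 - ε) := by
  replace hH : H = (fromCols 1 Hbar).submatrix id σ := hH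
  have hHnn : ∀ j u, 0 ≤ H j u := hH ▸ submatrix_fromCols_one_nonneg σ hHbar
  have hXs : Feas (idealX σ H) r := by
    simpa using feas_idealX σ hHnn hHcol (hH ▸ submatrix_fromCols_one_apply_symm_inl σ Hbar)
  have hVXs : V * idealX σ H = V := by
    rw [hV, Matrix.mul_assoc, hH, submatrix_fromCols_one_mul_idealX]
  have hres : ml1 (A - A * Xopt) ≤ 2 * ml1 N :=
    calc ml1 (A - A * Xopt) ≤ ml1 (A - A * idealX σ H) := hopt _ hXs
      _ = ml1 (N - N * idealX σ H) := by rw [hA, Matrix.add_mul, hVXs, add_sub_add_left_eq_sub]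
      _ ≤ 2 * ml1 N := ml1_sub_mul_le_two_mul N fun v =>
        ((l1_col_idealX σ H v).trans (hHcol v)).le
  intro i
  have hθ := l1_col_sub_mul_le_add V N Xopt i
  have hmass := l1_col_le_one_add (hV ▸ mul_apply_nonneg hW hHnn) hVcol hfeas.2.2.1 i
  rw [← hA] at hθ
  have hδ := (l1_col_le_ml1 (A - A * Xopt) i).trans hres
  have hν := ml1_nonneg N
  have hθnn : 0 ≤ l1 ((V - V * Xopt)ᵀ i) := Finset.sum_nonneg fun _ _ => abs_nonneg _
  change l1 ((V - V * Xopt)ᵀ i) ≤ _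
  rw [le_div_iff₀ (sub_pos.mpr hε1)]
  nlinarith [mul_le_mul_of_nonneg_left hmass hν]

/-- For an optimal solution of P(A,r): ‖v_i − V X_opt(:,i)‖₁ ≤ 4ε/(1−ε) for every i. -/
theorem opt_approx_bound
    {d r m : ℕ} (W : Matrix (Fin d) (Fin r) ℝ) (Hbar : Matrix (Fin r) (Fin m) ℝ)
    (σ : Equiv.Perm (Fin r ⊕ Fin m))
    (N A V : Matrix (Fin d) (Fin r ⊕ Fin m) ℝ)
    (H : Matrix (Fin r) (Fin r ⊕ Fin m) ℝ) (ε : ℝ)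
    (hW : ∀ i j, 0 ≤ W i j) (hHbar : ∀ i j, 0 ≤ Hbar i j)
    (hH : H = fun j u => Matrix.fromCols (1 : Matrix (Fin r) (Fin r) ℝ) Hbar j (σ u))
    (hV : V = W * H) (hA : A = V + N)
    (hVcol : ∀ u, l1 (fun i => V i u) = 1)
    (hWcol : ∀ j, l1 (fun i => W i j) = 1)
    (hHcol : ∀ u, l1 (fun j => H j u) = 1)
    (hε0 : 0 ≤ ε) (hε1 : ε < 1) (hN : ml1 N ≤ ε)
    (Xopt : Matrix (Fin r ⊕ Fin m) (Fin r ⊕ Fin m) ℝ)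
    (hfeas : Feas Xopt r)
    (hopt : ∀ X : Matrix (Fin r ⊕ Fin m) (Fin r ⊕ Fin m) ℝ,
      Feas X r → ml1 (A - A * Xopt) ≤ ml1 (A - A * X)) :
    ∀ i, l1 (fun k => V k i - (V * Xopt) k i) ≤ 4 * ε / (1 - ε) :=
  opt_approx_bound_general W Hbar σ N A V H ε hW hHbar hH hV hA hVcol hHcol hε1 hN Xopt hfeas hopt
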